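/- arXiv:2006.02423 — 7 statements merged into one kernel-verified Lean document; each statement's English description precedes it below -/
import Mathlib

section
/- Fix a time t ≥ 2 and suppose the monotone trends condition holds at time t: min{Δ_t(a), Δ_t(b)} ≤ Δ_t(trt) ≤ max{Δ_t(a), Δ_t(b)}. Then the per-period DID parameters bracket the increment of the treatment effect: min{τ_t(a), τ_t(b)} ≤ A_t − A_{t−1} ≤ max{τ_t(a), τ_t(b)}. -/
section LinearOrderedAddCommGroup

variable {α : Type*} [AddCommGroup α] [LinearOrder α] [IsOrderedAddMonoid α] {c x y z : α}

theorem min_add_sub_le_iff_le_max : min (c + z - x) (c + z - y) ≤ c ↔ z ≤ max x y := by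
  rw [min_sub_sub_left, sub_le_iff_le_add, add_le_add_iff_left]

theorem le_max_add_sub_iff_min_le : c ≤ max (c + z - x) (c + z - y) ↔ min x y ≤ z := by
  rw [max_sub_sub_left, le_sub_iff_add_le, add_le_add_iff_left]

end LinearOrderedAddCommGroup

theorem did_increment_bracketing_general
    (μa μb μc A : ℕ → ℝ) (t : ℕ)
    (hmt : min (μa t - μa (t - 1)) (μb t - μb (t - 1)) ≤ μc t - μc (t - 1) ∧
           μc t - μc (t - 1) ≤ max (μa t - μa (t - 1)) (μb t - μb (t - 1))) :
    min ((A t - A (t - 1)) + (μc t - μc (t - 1)) - (μa t - μa (t - 1)))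
        ((A t - A (t - 1)) + (μc t - μc (t - 1)) - (μb t - μb (t - 1)))
      ≤ A t - A (t - 1) ∧
    A t - A (t - 1) ≤
      max ((A t - A (t - 1)) + (μc t - μc (t - 1)) - (μa t - μa (t - 1)))
          ((A t - A (t - 1)) + (μc t - μc (t - 1)) - (μb t - μb (t - 1))) :=
  ⟨min_add_sub_le_iff_le_max.2 hmt.2, le_max_add_sub_iff_min_le.2 hmt.1⟩

/-- Under the monotone trends condition at time `t ≥ 2`, the per-period
DID parameters `τ_t(a), τ_t(b)` bracket the increment `A_t − A_{t−1}` of the treatment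
effect.  Here `μa, μb, μc` are the mean untreated outcomes of groups `a`, `b`, `trt`,
`Δ_t(g) = μ_g(t) − μ_g(t−1)`, and `τ_t(g) = (A_t − A_{t−1}) + Δ_t(trt) − Δ_t(g)`. -/
theorem did_increment_bracketing
    (μa μb μc A : ℕ → ℝ) (t : ℕ) (ht : 2 ≤ t)
    (hmt : min (μa t - μa (t - 1)) (μb t - μb (t - 1)) ≤ μc t - μc (t - 1) ∧
           μc t - μc (t - 1) ≤ max (μa t - μa (t - 1)) (μb t - μb (t - 1))) :
    min ((A t - A (t - 1)) + (μc t - μc (t - 1)) - (μa t - μa (t - 1)))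
        ((A t - A (t - 1)) + (μc t - μc (t - 1)) - (μb t - μb (t - 1)))
      ≤ A t - A (t - 1) ∧
    A t - A (t - 1) ≤
      max ((A t - A (t - 1)) + (μc t - μc (t - 1)) - (μa t - μa (t - 1)))
          ((A t - A (t - 1)) + (μc t - μc (t - 1)) - (μb t - μb (t - 1))) :=
  did_increment_bracketing_general μa μb μc A t hmt
end

section
/- (Theorem 1, DID bracketing under monotone trends.) Suppose the monotone trends condition holds at every time s with 2 ≤ s ≤ t, namely min{Δ_s(a), Δ_s(b)} ≤ Δ_s(trt) ≤ max{Δ_s(a), Δ_s(b)}, and A_1 = 0. Then for every t ≥ 2 the average treatment effect on the treated is partially identified by ∑_{s=2}^{t} min{τ_s(a), τ_s(b)} ≤ A_t ≤ ∑_{s=2}^{t} max{τ_s(a), τ_s(b)}. -/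
open Finset

theorem Finset.sum_Icc_sub_pred {M : Type*} [AddCommGroup M] (f : ℕ → M) {m n : ℕ}
    (hmn : m ≤ n) : ∑ i ∈ Icc (m + 1) n, (f i - f (i - 1)) = f n - f m := by
  induction n, hmn using Nat.le_induction with
  | base => simp
  | succ n hmn ih =>
    rw [sum_Icc_succ_top (by omega), ih, Nat.add_sub_cancel, sub_add_sub_cancel']

section

variable {α : Type*} [AddCommGroup α] [LinearOrder α] [IsOrderedAddMonoid α] {a b c : α}

theorem min_add_sub_le_of_le_max (x : α) (h : c ≤ max a b) :
    min (x + c - a) (x + c - b) ≤ x := by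
  rw [min_sub_sub_left, add_sub_assoc]
  exact add_le_of_nonpos_right (sub_nonpos.2 h)

theorem le_max_add_sub_of_min_le (x : α) (h : min a b ≤ c) :
    x ≤ max (x + c - a) (x + c - b) := by
  rw [max_sub_sub_left, add_sub_assoc]
  exact le_add_of_nonneg_right (sub_nonneg.2 h)

end

/-- Theorem 1, DID bracketing under monotone trends: if the monotone
trends condition holds for every `s` with `2 ≤ s ≤ t` and `A 1 = 0`, then
`∑_{s=2}^t min{τ_s(a), τ_s(b)} ≤ A_t ≤ ∑_{s=2}^t max{τ_s(a), τ_s(b)}`, where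
`Δ_s(g) = μ_g(s) − μ_g(s−1)` and `τ_s(g) = (A_s − A_{s−1}) + Δ_s(trt) − Δ_s(g)`. -/
theorem did_bracketing_monotone_trends
    (μa μb μc A : ℕ → ℝ) (t : ℕ) (ht : 2 ≤ t) (hA1 : A 1 = 0)
    (hmt : ∀ s ∈ Finset.Icc 2 t,
      min (μa s - μa (s - 1)) (μb s - μb (s - 1)) ≤ μc s - μc (s - 1) ∧
      μc s - μc (s - 1) ≤ max (μa s - μa (s - 1)) (μb s - μb (s - 1))) :
    (∑ s ∈ Finset.Icc 2 t,
        min ((A s - A (s - 1)) + (μc s - μc (s - 1)) - (μa s - μa (s - 1)))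
            ((A s - A (s - 1)) + (μc s - μc (s - 1)) - (μb s - μb (s - 1)))) ≤ A t ∧
    A t ≤ (∑ s ∈ Finset.Icc 2 t,
        max ((A s - A (s - 1)) + (μc s - μc (s - 1)) - (μa s - μa (s - 1)))
            ((A s - A (s - 1)) + (μc s - μc (s - 1)) - (μb s - μb (s - 1)))) := by
  have hA : A t = ∑ s ∈ Icc 2 t, (A s - A (s - 1)) := by
    rw [sum_Icc_sub_pred A (m := 1) (by omega), hA1, sub_zero]
  rw [hA]
  exact ⟨sum_le_sum fun s hs => min_add_sub_le_of_le_max _ (hmt s hs).2,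
    sum_le_sum fun s hs => le_max_add_sub_of_min_le _ (hmt s hs).1⟩
end

section
/- (Point identification under parallel trends.) Fix t ≥ 2 and suppose Δ_s(a) = Δ_s(b) for every s with 2 ≤ s ≤ t, and that the monotone trends condition min{Δ_s(a), Δ_s(b)} ≤ Δ_s(trt) ≤ max{Δ_s(a), Δ_s(b)} holds at every such s, and A_1 = 0. Then the lower and upper bracketing bounds coincide with the treatment effect: ∑_{s=2}^{t} min{τ_s(a), τ_s(b)} = ∑_{s=2}^{t} max{τ_s(a), τ_s(b)} = A_t. -/
/-!
Under parallel trends the two control trends agree, so the monotone trends condition pins the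
treated trend to them as well. Then `τ_s(a) = τ_s(b) = A_s - A_{s-1}`, and both bounds telescope
to `A_t - A_1 = A_t`.
-/

open Finset

theorem sum_Icc_two_sub_pred {G : Type*} [AddCommGroup G] (f : ℕ → G) {t : ℕ} (ht : 1 ≤ t) :
    ∑ s ∈ Icc 2 t, (f s - f (s - 1)) = f t - f 1 := by
  induction t, ht using Nat.le_induction with
  | base => simp
  | succ n hn ih =>
    rw [sum_Icc_succ_top (by omega), ih, Nat.add_sub_cancel, sub_add_sub_cancel']

theorem eq_of_min_self_le_of_le_max_self {α : Type*} [LinearOrder α] {a c : α}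
    (h : min a a ≤ c ∧ c ≤ max a a) : c = a := by
  rw [min_self, max_self] at h
  exact le_antisymm h.2 h.1

/-- Point identification under parallel trends: if `Δ_s(a) = Δ_s(b)`
for all `2 ≤ s ≤ t`, the monotone trends condition holds at every such `s`, and
`A 1 = 0`, then the lower and upper bracketing bounds both equal `A_t`. -/
theorem point_identification_parallel_trends
    (μa μb μc A : ℕ → ℝ) (t : ℕ) (ht : 2 ≤ t) (hA1 : A 1 = 0)
    (hpar : ∀ s ∈ Finset.Icc 2 t, μa s - μa (s - 1) = μb s - μb (s - 1))
    (hmt : ∀ s ∈ Finset.Icc 2 t,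
      min (μa s - μa (s - 1)) (μb s - μb (s - 1)) ≤ μc s - μc (s - 1) ∧
      μc s - μc (s - 1) ≤ max (μa s - μa (s - 1)) (μb s - μb (s - 1))) :
    (∑ s ∈ Finset.Icc 2 t,
        min ((A s - A (s - 1)) + (μc s - μc (s - 1)) - (μa s - μa (s - 1)))
            ((A s - A (s - 1)) + (μc s - μc (s - 1)) - (μb s - μb (s - 1)))) = A t ∧
    (∑ s ∈ Finset.Icc 2 t,
        max ((A s - A (s - 1)) + (μc s - μc (s - 1)) - (μa s - μa (s - 1)))
            ((A s - A (s - 1)) + (μc s - μc (s - 1)) - (μb s - μb (s - 1)))) = A t := by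
  have htrt : ∀ s ∈ Icc 2 t, μc s - μc (s - 1) = μa s - μa (s - 1) := fun s hs =>
    eq_of_min_self_le_of_le_max_self (hpar s hs ▸ hmt s hs)
  have hA : ∑ s ∈ Icc 2 t, (A s - A (s - 1)) = A t := by
    rw [sum_Icc_two_sub_pred A (by omega), hA1, sub_zero]
  rw [← hA]
  constructor <;>
  · refine sum_congr rfl fun s hs => ?_
    rw [htrt s hs, ← hpar s hs, add_sub_cancel_right]
    simp only [min_self, max_self]
end

section
/- (Interactive fixed effects imply monotone trends.) Suppose the group-level untreated mean outcomes follow the single-factor interactive fixed effects model μ_g(t) = α_t + η_g + λ_g F_t for g ∈ {a, b, trt} and all t, where α : ℕ → ℝ are time fixed effects, η_g, λ_g ∈ ℝ are group-specific constants, and F : ℕ → ℝ is a common latent factor. If either λ_a ≤ λ_trt ≤ λ_b or λ_b ≤ λ_trt ≤ λ_a, then for every t ≥ 2 the monotone trends condition holds: min{Δ_t(a), Δ_t(b)} ≤ Δ_t(trt) ≤ max{Δ_t(a), Δ_t(b)}. -/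
/-! Each group's trend `μ_g t - μ_g (t - 1)` equals `(α t - α (t - 1)) + λ_g * (F t - F (t - 1))`,
an affine function of the loading `λ_g`; an affine map of the line sends the segment between
`λ_a` and `λ_b` onto the segment between their images. -/

open Set
open scoped Interval

theorem add_mul_mem_uIcc {𝕜 : Type*} [Field 𝕜] [LinearOrder 𝕜] [IsStrictOrderedRing 𝕜]
    {a b c : 𝕜} (hc : c ∈ [[a, b]]) (x d : 𝕜) : x + c * d ∈ [[x + a * d, x + b * d]] := by
  rw [← image_const_add_uIcc, ← image_mul_const_uIcc]
  exact ⟨c * d, ⟨c, hc, rfl⟩, rfl⟩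

theorem sub_eq_of_interactive_fixed_effects {ι R : Type*} [CommRing R] {α F μ : ι → R}
    {η lam : R} (hμ : ∀ t, μ t = α t + η + lam * F t) (s t : ι) :
    μ t - μ s = (α t - α s) + lam * (F t - F s) := by
  rw [hμ t, hμ s]
  ring

/-- Interactive fixed effects imply monotone trends: if the group mean
outcomes follow the single-factor interactive fixed effects model
`μ_g(t) = α_t + η_g + λ_g F_t`, and the factor loadings satisfy
`λ_a ≤ λ_trt ≤ λ_b` or `λ_b ≤ λ_trt ≤ λ_a`, then the monotone trends condition holds
at every time `t ≥ 2`. -/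
theorem interactive_fixed_effects_imply_monotone_trends
    (α F μa μb μc : ℕ → ℝ) (ηa ηb ηc lamA lamB lamC : ℝ)
    (hμa : ∀ t, μa t = α t + ηa + lamA * F t)
    (hμb : ∀ t, μb t = α t + ηb + lamB * F t)
    (hμc : ∀ t, μc t = α t + ηc + lamC * F t)
    (hlam : (lamA ≤ lamC ∧ lamC ≤ lamB) ∨ (lamB ≤ lamC ∧ lamC ≤ lamA)) :
    ∀ t : ℕ, 2 ≤ t →
      min (μa t - μa (t - 1)) (μb t - μb (t - 1)) ≤ μc t - μc (t - 1) ∧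
      μc t - μc (t - 1) ≤ max (μa t - μa (t - 1)) (μb t - μb (t - 1)) := by
  intro t _
  have hmem := add_mul_mem_uIcc (mem_uIcc.mpr hlam) (α t - α (t - 1)) (F t - F (t - 1))
  rw [← sub_eq_of_interactive_fixed_effects hμa, ← sub_eq_of_interactive_fixed_effects hμb,
    ← sub_eq_of_interactive_fixed_effects hμc] at hmem
  exact hmem
end

section
/- (Original DID bracketing via stochastic ordering.) Let μ_lc, μ_trt, μ_uc be Borel probability measures on ℝ that are stochastically ordered in the sense that for every bounded, measurable, nondecreasing function f : ℝ → ℝ one has ∫ f dμ_lc ≤ ∫ f dμ_trt ≤ ∫ f dμ_uc. Let d : ℝ → ℝ be bounded and measurable, and assume d is either monotone nondecreasing or monotone nonincreasing. Let ψ ∈ ℝ and define τ(lc) = ψ + ∫ d dμ_trt − ∫ d dμ_lc and τ(uc) = ψ + ∫ d dμ_trt − ∫ d dμ_uc. Then min{τ(lc), τ(uc)} ≤ ψ ≤ max{τ(lc), τ(uc)}. -/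
/-!
`ψ - τ(lc) = ∫ d dμ_lc - ∫ d dμ_trt` and `ψ - τ(uc) = ∫ d dμ_uc - ∫ d dμ_trt` have opposite
signs: the stochastic order puts `∫ d dμ_trt` between the other two integrals, applied to `d`
when `d` is nondecreasing and to `-d` when it is nonincreasing.
-/

open MeasureTheory

theorem min_le_and_le_max_of_mem_uIcc {α : Type*} [AddCommGroup α] [LinearOrder α]
    [IsOrderedAddMonoid α] {a b c ψ : α} (h : b ∈ Set.uIcc a c) :
    min (ψ + b - a) (ψ + b - c) ≤ ψ ∧ ψ ≤ max (ψ + b - a) (ψ + b - c) := by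
  rcases Set.mem_uIcc.mp h with ⟨hab, hbc⟩ | ⟨hcb, hba⟩
  · exact ⟨min_le_of_right_le (by simpa [add_sub_assoc] using hbc),
      le_max_of_le_left (by simpa [add_sub_assoc] using hab)⟩
  · exact ⟨min_le_of_left_le (by simpa [add_sub_assoc] using hba),
      le_max_of_le_right (by simpa [add_sub_assoc] using hcb)⟩

theorem integral_antitone_le_of_stochastic_order {μ ν : Measure ℝ}
    (horder : ∀ f : ℝ → ℝ, Measurable f → Monotone f → (∃ C : ℝ, ∀ x, |f x| ≤ C) →
      ∫ x, f x ∂μ ≤ ∫ x, f x ∂ν)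
    {f : ℝ → ℝ} (hf_meas : Measurable f) (hf_anti : Antitone f)
    (hf_bdd : ∃ C : ℝ, ∀ x, |f x| ≤ C) :
    ∫ x, f x ∂ν ≤ ∫ x, f x ∂μ := by
  have hneg_bdd : ∃ C : ℝ, ∀ x, |-f x| ≤ C := by
    obtain ⟨C, hC⟩ := hf_bdd
    exact ⟨C, fun x => (abs_neg (f x)).trans_le (hC x)⟩
  simpa only [integral_neg, neg_le_neg_iff] using
    horder (fun x => -f x) hf_meas.neg hf_anti.neg hneg_bdd

theorem original_did_bracketing_stochastic_order_general
    (μlc μtrt μuc : Measure ℝ)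
    (horder : ∀ f : ℝ → ℝ, Measurable f → Monotone f → (∃ C : ℝ, ∀ x, |f x| ≤ C) →
      (∫ x, f x ∂μlc) ≤ (∫ x, f x ∂μtrt) ∧ (∫ x, f x ∂μtrt) ≤ (∫ x, f x ∂μuc))
    (d : ℝ → ℝ) (hd_meas : Measurable d) (hd_bdd : ∃ C : ℝ, ∀ x, |d x| ≤ C)
    (hd_mono : Monotone d ∨ Antitone d)
    (ψ : ℝ) :
    min (ψ + (∫ x, d x ∂μtrt) - ∫ x, d x ∂μlc)
        (ψ + (∫ x, d x ∂μtrt) - ∫ x, d x ∂μuc) ≤ ψ ∧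
    ψ ≤ max (ψ + (∫ x, d x ∂μtrt) - ∫ x, d x ∂μlc)
            (ψ + (∫ x, d x ∂μtrt) - ∫ x, d x ∂μuc) := by
  apply min_le_and_le_max_of_mem_uIcc
  rcases hd_mono with hd_mono | hd_anti
  · exact Set.mem_uIcc.mpr <| Or.inl (horder d hd_meas hd_mono hd_bdd)
  · exact Set.mem_uIcc.mpr <| Or.inr
      ⟨integral_antitone_le_of_stochastic_order (fun f hm hf hb => (horder f hm hf hb).2)
          hd_meas hd_anti hd_bdd,
        integral_antitone_le_of_stochastic_order (fun f hm hf hb => (horder f hm hf hb).1)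
          hd_meas hd_anti hd_bdd⟩

/-- Original DID bracketing via stochastic ordering: if the Borel
probability measures `μlc, μtrt, μuc` on `ℝ` are stochastically ordered (integrals of
bounded measurable nondecreasing functions are ordered), `d : ℝ → ℝ` is bounded,
measurable, and monotone (nondecreasing or nonincreasing), and
`τ(lc) = ψ + ∫ d dμtrt − ∫ d dμlc`, `τ(uc) = ψ + ∫ d dμtrt − ∫ d dμuc`, then
`min{τ(lc), τ(uc)} ≤ ψ ≤ max{τ(lc), τ(uc)}`. -/
theorem original_did_bracketing_stochastic_order
    (μlc μtrt μuc : Measure ℝ)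
    [IsProbabilityMeasure μlc] [IsProbabilityMeasure μtrt] [IsProbabilityMeasure μuc]
    (horder : ∀ f : ℝ → ℝ, Measurable f → Monotone f → (∃ C : ℝ, ∀ x, |f x| ≤ C) →
      (∫ x, f x ∂μlc) ≤ (∫ x, f x ∂μtrt) ∧ (∫ x, f x ∂μtrt) ≤ (∫ x, f x ∂μuc))
    (d : ℝ → ℝ) (hd_meas : Measurable d) (hd_bdd : ∃ C : ℝ, ∀ x, |d x| ≤ C)
    (hd_mono : Monotone d ∨ Antitone d)
    (ψ : ℝ) :
    min (ψ + (∫ x, d x ∂μtrt) - ∫ x, d x ∂μlc)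
        (ψ + (∫ x, d x ∂μtrt) - ∫ x, d x ∂μuc) ≤ ψ ∧
    ψ ≤ max (ψ + (∫ x, d x ∂μtrt) - ∫ x, d x ∂μlc)
            (ψ + (∫ x, d x ∂μtrt) - ∫ x, d x ∂μuc) :=
  original_did_bracketing_stochastic_order_general μlc μtrt μuc horder d hd_meas hd_bdd hd_mono ψ
end

section
/- (Validity of the falsification test.) Let (Ω, 𝓕, P) be a probability space and let p_a, p_b : Ω → ℝ be random variables taking values in [0, 1]. Suppose either (i) P(p_a ≤ t) ≤ t and P(p_b ≤ t) ≤ t for all t ∈ [0, 1], or (ii) P(1 − p_a ≤ t) ≤ t and P(1 − p_b ≤ t) ≤ t for all t ∈ [0, 1]. Then for every α ∈ [0, 1], P( max(min(p_a, p_b), min(1 − p_a, 1 − p_b)) ≤ α/2 ) ≤ α. -/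
/-!
Under either null, the rejection event lies inside the event that the smaller of two valid
p-values is at most `α / 2`, and the union bound gives probability at most `α / 2 + α / 2`.
-/

open MeasureTheory

lemma measure_min_le_le_add {Ω : Type*} [MeasurableSpace Ω] (μ : Measure Ω) (f g : Ω → ℝ)
    (t : ℝ) : μ {ω | min (f ω) (g ω) ≤ t} ≤ μ {ω | f ω ≤ t} + μ {ω | g ω ≤ t} := by
  simp only [min_le_iff, Set.ofPred_or]
  exact measure_union_le _ _

lemma measure_min_le_le_two_mul {Ω : Type*} [MeasurableSpace Ω] (μ : Measure Ω)
    {f g : Ω → ℝ} {t : ℝ} (ht : 0 ≤ t) (hf : μ {ω | f ω ≤ t} ≤ ENNReal.ofReal t)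
    (hg : μ {ω | g ω ≤ t} ≤ ENNReal.ofReal t) :
    μ {ω | min (f ω) (g ω) ≤ t} ≤ ENNReal.ofReal (2 * t) :=
  calc μ {ω | min (f ω) (g ω) ≤ t}
      ≤ μ {ω | f ω ≤ t} + μ {ω | g ω ≤ t} := measure_min_le_le_add μ f g t
    _ ≤ ENNReal.ofReal t + ENNReal.ofReal t := add_le_add hf hg
    _ = ENNReal.ofReal (2 * t) := by rw [← ENNReal.ofReal_add ht ht, two_mul]

theorem falsification_test_validity_general
    {Ω : Type*} [MeasurableSpace Ω] (P : Measure Ω)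
    (pa pb : Ω → ℝ)
    (hvalid :
      (∀ t ∈ Set.Icc (0 : ℝ) 1,
        P {ω | pa ω ≤ t} ≤ ENNReal.ofReal t ∧ P {ω | pb ω ≤ t} ≤ ENNReal.ofReal t) ∨
      (∀ t ∈ Set.Icc (0 : ℝ) 1,
        P {ω | 1 - pa ω ≤ t} ≤ ENNReal.ofReal t ∧
        P {ω | 1 - pb ω ≤ t} ≤ ENNReal.ofReal t))
    (α : ℝ) (hα : α ∈ Set.Icc (0 : ℝ) 1) :
    P {ω | max (min (pa ω) (pb ω)) (min (1 - pa ω) (1 - pb ω)) ≤ α / 2} ≤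
      ENNReal.ofReal α := by
  obtain ⟨hα0, hα1⟩ := hα
  have hhalf : α / 2 ∈ Set.Icc (0 : ℝ) 1 := ⟨by linarith, by linarith⟩
  have hlevel : ∀ f g : Ω → ℝ,
      P {ω | f ω ≤ α / 2} ≤ ENNReal.ofReal (α / 2) ∧
        P {ω | g ω ≤ α / 2} ≤ ENNReal.ofReal (α / 2) →
      P {ω | min (f ω) (g ω) ≤ α / 2} ≤ ENNReal.ofReal α := fun f g ⟨hf, hg⟩ => by
    simpa [mul_div_cancel₀] using measure_min_le_le_two_mul P hhalf.1 hf hg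
  rcases hvalid with hincr | hdecr
  · refine (measure_mono ?_).trans (hlevel _ _ (hincr _ hhalf))
    exact Set.ofPred_subset_ofPred.2 fun _ => le_of_max_le_left
  · refine (measure_mono ?_).trans (hlevel _ _ (hdecr _ hhalf))
    exact Set.ofPred_subset_ofPred.2 fun _ => le_of_max_le_right

/-- Validity of the falsification test: if `p_a, p_b` are `[0,1]`-valued
random variables and either both are valid p-values, or both of `1 − p_a, 1 − p_b` are
valid p-values, then the falsification test rejecting when
`max(min(p_a, p_b), min(1 − p_a, 1 − p_b)) ≤ α/2` has level at most `α`. -/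
theorem falsification_test_validity
    {Ω : Type*} [MeasurableSpace Ω] (P : Measure Ω) [IsProbabilityMeasure P]
    (pa pb : Ω → ℝ)
    (hpa : ∀ ω, pa ω ∈ Set.Icc (0 : ℝ) 1) (hpb : ∀ ω, pb ω ∈ Set.Icc (0 : ℝ) 1)
    (hvalid :
      (∀ t ∈ Set.Icc (0 : ℝ) 1,
        P {ω | pa ω ≤ t} ≤ ENNReal.ofReal t ∧ P {ω | pb ω ≤ t} ≤ ENNReal.ofReal t) ∨
      (∀ t ∈ Set.Icc (0 : ℝ) 1,
        P {ω | 1 - pa ω ≤ t} ≤ ENNReal.ofReal t ∧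
        P {ω | 1 - pb ω ≤ t} ≤ ENNReal.ofReal t))
    (α : ℝ) (hα : α ∈ Set.Icc (0 : ℝ) 1) :
    P {ω | max (min (pa ω) (pb ω)) (min (1 - pa ω) (1 - pb ω)) ≤ α / 2} ≤
      ENNReal.ofReal α :=
  falsification_test_validity_general P pa pb hvalid α hα
end

section
/- (Theorem 3(a), sensitivity bounds.) Fix t ≥ 2 and nonnegative sensitivity parameters γ_s ≥ 0 and δ_s ≥ 0 for s = 2, …, t. Suppose the relaxed monotone trends condition holds at every s with 2 ≤ s ≤ t: min{Δ_s(a), Δ_s(b)} − γ_s ≤ Δ_s(trt) ≤ max{Δ_s(a), Δ_s(b)} + δ_s, and A_1 = 0. Then ∑_{s=2}^{t} min{τ_s(a), τ_s(b)} − ∑_{s=2}^{t} δ_s ≤ A_t ≤ ∑_{s=2}^{t} max{τ_s(a), τ_s(b)} + ∑_{s=2}^{t} γ_s. -/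
/-
The average effect telescopes, `A t = ∑_{s=2}^t (A s - A (s-1))` since `A 1 = 0`, and each
increment is bracketed by the DID parameters: `min{τ_s(a), τ_s(b)} = (A s - A (s-1)) + Δ_s(trt)
- max{Δ_s(a), Δ_s(b)}`, so the relaxed monotone trends condition at `s` is exactly
`min{τ_s(a), τ_s(b)} - δ_s ≤ A s - A (s-1) ≤ max{τ_s(a), τ_s(b)} + γ_s`. Summing over `s` gives the bounds.
-/

open Finset

theorem Finset.sum_Ioc_sub_pred {M : Type*} [AddCommGroup M] (f : ℕ → M) {m n : ℕ} (h : m ≤ n) :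
    ∑ i ∈ Ioc m n, (f i - f (i - 1)) = f n - f m := by
  rw [← Ico_add_one_add_one_eq_Ioc, ← sum_Ico_add' (fun i => f i - f (i - 1)), ← sum_Ico_sub f h]
  simp only [Nat.add_sub_cancel]

section MinMax

variable {α : Type*} [AddCommGroup α] [LinearOrder α] [IsOrderedAddMonoid α] {x c a b : α}

theorem min_sub_sub_sub_le_of_le_max_add {d : α} (h : c ≤ max a b + d) :
    min (x + c - a) (x + c - b) - d ≤ x := by
  rwa [min_sub_sub_left, sub_sub, sub_le_iff_le_add, add_le_add_iff_left]

theorem le_max_sub_sub_add_of_min_sub_le {g : α} (h : min a b - g ≤ c) :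
    x ≤ max (x + c - a) (x + c - b) + g := by
  rwa [max_sub_sub_left, sub_add, le_sub_iff_add_le, add_le_add_iff_left]

end MinMax

theorem did_sensitivity_bounds_general
    (μa μb μc A γ δ : ℕ → ℝ) (t : ℕ) (ht : 2 ≤ t) (hA1 : A 1 = 0)
    (hmt : ∀ s ∈ Finset.Icc 2 t,
      min (μa s - μa (s - 1)) (μb s - μb (s - 1)) - γ s ≤ μc s - μc (s - 1) ∧
      μc s - μc (s - 1) ≤ max (μa s - μa (s - 1)) (μb s - μb (s - 1)) + δ s) :
    (∑ s ∈ Finset.Icc 2 t,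
        min ((A s - A (s - 1)) + (μc s - μc (s - 1)) - (μa s - μa (s - 1)))
            ((A s - A (s - 1)) + (μc s - μc (s - 1)) - (μb s - μb (s - 1)))) -
      (∑ s ∈ Finset.Icc 2 t, δ s) ≤ A t ∧
    A t ≤ (∑ s ∈ Finset.Icc 2 t,
        max ((A s - A (s - 1)) + (μc s - μc (s - 1)) - (μa s - μa (s - 1)))
            ((A s - A (s - 1)) + (μc s - μc (s - 1)) - (μb s - μb (s - 1)))) +
      (∑ s ∈ Finset.Icc 2 t, γ s) := by
  have hAt : A t = ∑ s ∈ Icc 2 t, (A s - A (s - 1)) := by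
    have h := sum_Ioc_sub_pred A (show 1 ≤ t by omega)
    rw [← Icc_add_one_left_eq_Ioc, hA1, sub_zero] at h
    exact h.symm
  refine ⟨?_, ?_⟩
  · rw [hAt, ← sum_sub_distrib]
    exact sum_le_sum fun s hs => min_sub_sub_sub_le_of_le_max_add (hmt s hs).2
  · rw [hAt, ← sum_add_distrib]
    exact sum_le_sum fun s hs => le_max_sub_sub_add_of_min_sub_le (hmt s hs).1

/-- Theorem 3(a), sensitivity bounds: if the relaxed monotone trends
condition `min{Δ_s(a), Δ_s(b)} − γ_s ≤ Δ_s(trt) ≤ max{Δ_s(a), Δ_s(b)} + δ_s` holds for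
every `2 ≤ s ≤ t` with nonnegative sensitivity parameters `γ_s, δ_s`, and `A 1 = 0`,
then `∑ min{τ_s(a), τ_s(b)} − ∑ δ_s ≤ A_t ≤ ∑ max{τ_s(a), τ_s(b)} + ∑ γ_s`. -/
theorem did_sensitivity_bounds
    (μa μb μc A γ δ : ℕ → ℝ) (t : ℕ) (ht : 2 ≤ t) (hA1 : A 1 = 0)
    (hγ : ∀ s ∈ Finset.Icc 2 t, 0 ≤ γ s) (hδ : ∀ s ∈ Finset.Icc 2 t, 0 ≤ δ s)
    (hmt : ∀ s ∈ Finset.Icc 2 t,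
      min (μa s - μa (s - 1)) (μb s - μb (s - 1)) - γ s ≤ μc s - μc (s - 1) ∧
      μc s - μc (s - 1) ≤ max (μa s - μa (s - 1)) (μb s - μb (s - 1)) + δ s) :
    (∑ s ∈ Finset.Icc 2 t,
        min ((A s - A (s - 1)) + (μc s - μc (s - 1)) - (μa s - μa (s - 1)))
            ((A s - A (s - 1)) + (μc s - μc (s - 1)) - (μb s - μb (s - 1)))) -
      (∑ s ∈ Finset.Icc 2 t, δ s) ≤ A t ∧
    A t ≤ (∑ s ∈ Finset.Icc 2 t,
        max ((A s - A (s - 1)) + (μc s - μc (s - 1)) - (μa s - μa (s - 1)))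
            ((A s - A (s - 1)) + (μc s - μc (s - 1)) - (μb s - μb (s - 1)))) +
      (∑ s ∈ Finset.Icc 2 t, γ s) :=
  did_sensitivity_bounds_general μa μb μc A γ δ t ht hA1 hmt
end
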